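/- arXiv:1903.04158 — 7 statements merged into one kernel-verified Lean document; each statement's English description precedes it below -/
import Mathlib

section
/- Let g ≥ 2 and n ≥ 1 be integers, let 0 < r_1 < r_2 < ⋯ < r_n = g be integers, let μ_1 > μ_2 > ⋯ > μ_n ≥ 0 be rational numbers and set μ_{n+1} = 0. Let d_1, …, d_n be rational numbers satisfying the Clifford type inequalities d_i ≥ 2(r_i − 1) for every 1 ≤ i ≤ n, and set d_{n+1} = 2g − 2. Put χ = Σ_{i=1}^n r_i(μ_i − μ_{i+1}). If a real number K satisfies K ≥ Σ_{i=1}^n (d_i + d_{i+1})(μ_i − μ_{i+1}) and K ≥ (2g − 2)(μ_1 + μ_n), then g·K ≥ (4g − 4)·χ. -/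
/-!
With gaps `εᵢ = μᵢ - μᵢ₊₁ ≥ 0` we have `χ = ∑ rᵢ εᵢ`, `μ₁ = ∑ εᵢ` and `μₙ = εₙ`. The Clifford
bounds give `dᵢ + dᵢ₊₁ + 2 ≥ 2rᵢ + 2rᵢ₊₁ - 2 ≥ 4rᵢ` for `i < n`, since the ranks increase by at
least one, and `dₙ + dₙ₊₁ + 4 ≥ 4g = 4rₙ`. Weighting by the gaps and summing yields
`4χ ≤ ∑ (dᵢ + dᵢ₊₁) εᵢ + 2(μ₁ + μₙ)`. Multiplying by `g - 1` and using the two lower bounds on `K`,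
once with weight `g - 1` and once with weight `1`, gives `(4g - 4)χ ≤ gK`.
-/

open Finset

theorem sum_Icc_one_sub_succ {G : Type*} [AddCommGroup G] {n : ℕ} (hn : 1 ≤ n) (μ : ℕ → G) :
    ∑ i ∈ Icc 1 n, (μ i - μ (i + 1)) = μ 1 - μ (n + 1) := by
  simpa only [neg_sub_neg] using sum_Icc_sub hn (fun i => -μ i)

theorem four_mul_sum_rank_mul_gap_le {𝕜 : Type*} [Field 𝕜] [LinearOrder 𝕜]
    [IsStrictOrderedRing 𝕜] (n : ℕ) (hn : 1 ≤ n) (r μ d : ℕ → 𝕜)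
    (hr_mono : ∀ i, 1 ≤ i → i < n → r i + 1 ≤ r (i + 1))
    (hμ_anti : ∀ i, 1 ≤ i → i < n → μ (i + 1) ≤ μ i)
    (hμ_n : 0 ≤ μ n) (hμ_n1 : μ (n + 1) = 0)
    (hd : ∀ i, 1 ≤ i → i ≤ n → 2 * (r i - 1) ≤ d i)
    (hd_n1 : d (n + 1) = 2 * r n - 2) :
    4 * ∑ i ∈ Icc 1 n, r i * (μ i - μ (i + 1)) ≤
      ∑ i ∈ Icc 1 n, (d i + d (i + 1)) * (μ i - μ (i + 1)) + 2 * (μ 1 + μ n) := by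
  have hgap : ∀ i ∈ Icc 1 n, 0 ≤ μ i - μ (i + 1) := by
    intro i hi
    obtain ⟨h1, hle⟩ := mem_Icc.mp hi
    rcases hle.lt_or_eq with hlt | rfl
    · exact sub_nonneg.mpr (hμ_anti i h1 hlt)
    · rwa [hμ_n1, sub_zero]
  have hcoeff : ∀ i ∈ Icc 1 n, 4 * r i ≤ d i + d (i + 1) + 2 + if i = n then 2 else 0 := by
    intro i hi
    obtain ⟨h1, hle⟩ := mem_Icc.mp hi
    have hdi := hd i h1 hle
    rcases hle.lt_or_eq with hlt | rfl
    · have hdi1 := hd (i + 1) (by omega) hlt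
      have hri := hr_mono i h1 hlt
      rw [if_neg hlt.ne]
      linarith
    · rw [if_pos rfl, hd_n1]
      linarith
  calc 4 * ∑ i ∈ Icc 1 n, r i * (μ i - μ (i + 1))
      = ∑ i ∈ Icc 1 n, 4 * r i * (μ i - μ (i + 1)) := by
        rw [mul_sum]; simp only [mul_assoc]
    _ ≤ ∑ i ∈ Icc 1 n, (d i + d (i + 1) + 2 + if i = n then 2 else 0) * (μ i - μ (i + 1)) :=
        sum_le_sum fun i hi => mul_le_mul_of_nonneg_right (hcoeff i hi) (hgap i hi)
    _ = ∑ i ∈ Icc 1 n, (d i + d (i + 1)) * (μ i - μ (i + 1)) + 2 * (μ 1 + μ n) := by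
        simp only [add_mul, ite_mul, zero_mul, sum_add_distrib, sum_ite_eq', ← mul_sum,
          sum_Icc_one_sub_succ hn, mem_Icc, le_refl, hn, and_self, if_true, hμ_n1]
        ring

theorem stmt_0_general (g n : ℕ) (hg : 2 ≤ g) (hn : 1 ≤ n)
    (r : ℕ → ℤ) (μ d : ℕ → ℚ) (χ : ℚ) (K : ℝ)
    (hr_mono : ∀ i, 1 ≤ i → i < n → r i < r (i + 1))
    (hr_n : r n = (g : ℤ))
    (hμ_mono : ∀ i, 1 ≤ i → i < n → μ (i + 1) < μ i)
    (hμ_n : 0 ≤ μ n)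
    (hμ_n1 : μ (n + 1) = 0)
    (hd : ∀ i, 1 ≤ i → i ≤ n → 2 * ((r i : ℚ) - 1) ≤ d i)
    (hd_n1 : d (n + 1) = 2 * (g : ℚ) - 2)
    (hχ : χ = ∑ i ∈ Finset.Icc 1 n, (r i : ℚ) * (μ i - μ (i + 1)))
    (hK1 : ((∑ i ∈ Finset.Icc 1 n, (d i + d (i + 1)) * (μ i - μ (i + 1)) : ℚ) : ℝ) ≤ K)
    (hK2 : (((2 * (g : ℚ) - 2) * (μ 1 + μ n) : ℚ) : ℝ) ≤ K) :
    (4 * (g : ℝ) - 4) * (χ : ℝ) ≤ (g : ℝ) * K := by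
  have hrn : ((r n : ℤ) : ℚ) = g := by exact_mod_cast hr_n
  have hcore := four_mul_sum_rank_mul_gap_le n hn (fun i => (r i : ℚ)) μ d
    (fun i h1 h2 => by exact_mod_cast hr_mono i h1 h2) (fun i h1 h2 => (hμ_mono i h1 h2).le)
    hμ_n hμ_n1 hd (by rw [hd_n1, hrn])
  rw [← hχ] at hcore
  set A := ∑ i ∈ Finset.Icc 1 n, (d i + d (i + 1)) * (μ i - μ (i + 1))
  have hcoreR : 4 * (χ : ℝ) ≤ A + 2 * (μ 1 + μ n) := by exact_mod_cast hcore
  have hg1 : (0 : ℝ) ≤ g - 1 := by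
    have : (2 : ℝ) ≤ g := by exact_mod_cast hg
    linarith
  push_cast at hK2
  calc (4 * (g : ℝ) - 4) * χ = (g - 1) * (4 * χ) := by ring
    _ ≤ (g - 1) * (A + 2 * (μ 1 + μ n)) := by gcongr
    _ = (g - 1) * A + (2 * g - 2) * (μ 1 + μ n) := by ring
    _ ≤ (g - 1) * K + K := by gcongr
    _ = g * K := by ring

/-- Numerical core of Xiao's slope inequality in positive characteristic. -/
theorem stmt_0 (g n : ℕ) (hg : 2 ≤ g) (hn : 1 ≤ n)
    (r : ℕ → ℤ) (μ d : ℕ → ℚ) (χ : ℚ) (K : ℝ)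
    (hr_pos : 0 < r 1)
    (hr_mono : ∀ i, 1 ≤ i → i < n → r i < r (i + 1))
    (hr_n : r n = (g : ℤ))
    (hμ_mono : ∀ i, 1 ≤ i → i < n → μ (i + 1) < μ i)
    (hμ_n : 0 ≤ μ n)
    (hμ_n1 : μ (n + 1) = 0)
    (hd : ∀ i, 1 ≤ i → i ≤ n → 2 * ((r i : ℚ) - 1) ≤ d i)
    (hd_n1 : d (n + 1) = 2 * (g : ℚ) - 2)
    (hχ : χ = ∑ i ∈ Finset.Icc 1 n, (r i : ℚ) * (μ i - μ (i + 1)))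
    (hK1 : ((∑ i ∈ Finset.Icc 1 n, (d i + d (i + 1)) * (μ i - μ (i + 1)) : ℚ) : ℝ) ≤ K)
    (hK2 : (((2 * (g : ℚ) - 2) * (μ 1 + μ n) : ℚ) : ℝ) ≤ K) :
    (4 * (g : ℝ) - 4) * (χ : ℝ) ≤ (g : ℝ) * K :=
  stmt_0_general g n hg hn r μ d χ K hr_mono hr_n hμ_mono hμ_n hμ_n1 hd hd_n1 hχ hK1 hK2
end

section
/- Let g ≥ 2 and n ≥ 1 be integers, let 0 < r_1 < r_2 < ⋯ < r_n = g be integers, let μ_1 > μ_2 > ⋯ > μ_n ≥ 0 be rational numbers and set μ_{n+1} = 0. Let d_1, …, d_n be rational numbers satisfying the Clifford type inequalities d_i ≥ 2(r_i − 1) for every 1 ≤ i ≤ n, and set d_{n+1} = 2g − 2. Put χ = Σ_{i=1}^n r_i(μ_i − μ_{i+1}). Then Σ_{i=1}^n (d_i + d_{i+1})(μ_i − μ_{i+1}) ≥ 4χ − 2(μ_1 + μ_n). -/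
/-!
For `i < n` the Clifford bounds at two consecutive indices give `d i + d (i + 1) ≥ 4 r i - 2`,
because `r (i + 1) ≥ r i + 1`; at `i = n` one only gets `d n + d (n + 1) ≥ 4 g - 4`, a loss of
`2 μ n` after weighting by `μ n - μ (n + 1) = μ n`. Weighting the other bounds by
`μ i - μ (i + 1) ≥ 0` and summing, the constant `-2` telescopes to `-2 (μ 1 - μ n)`.
-/

open Finset

theorem four_mul_sub_two_le_add {K : Type*} [Field K] [LinearOrder K] [IsStrictOrderedRing K]
    {r s : ℤ} {a b : K} (hrs : r < s) (ha : 2 * ((r : K) - 1) ≤ a) (hb : 2 * ((s : K) - 1) ≤ b) :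
    4 * (r : K) - 2 ≤ a + b := by
  have : (r : K) + 1 ≤ s := by exact_mod_cast hrs
  linarith

theorem stmt_1_general (g n : ℕ) (hn : 1 ≤ n)
    (r : ℕ → ℤ) (μ d : ℕ → ℚ) (χ : ℚ)
    (hr_mono : ∀ i, 1 ≤ i → i < n → r i < r (i + 1))
    (hr_n : r n = (g : ℤ))
    (hμ_mono : ∀ i, 1 ≤ i → i < n → μ (i + 1) < μ i)
    (hμ_n : 0 ≤ μ n)
    (hμ_n1 : μ (n + 1) = 0)
    (hd : ∀ i, 1 ≤ i → i ≤ n → 2 * ((r i : ℚ) - 1) ≤ d i)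
    (hd_n1 : d (n + 1) = 2 * (g : ℚ) - 2)
    (hχ : χ = ∑ i ∈ Finset.Icc 1 n, (r i : ℚ) * (μ i - μ (i + 1))) :
    4 * χ - 2 * (μ 1 + μ n) ≤ ∑ i ∈ Finset.Icc 1 n, (d i + d (i + 1)) * (μ i - μ (i + 1)) := by
  have hbody : ∑ i ∈ Ico 1 n, (4 * (r i : ℚ) - 2) * (μ i - μ (i + 1))
      ≤ ∑ i ∈ Ico 1 n, (d i + d (i + 1)) * (μ i - μ (i + 1)) := by
    refine sum_le_sum fun i hi => ?_
    obtain ⟨hi1, hin⟩ := mem_Ico.1 hi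
    exact mul_le_mul_of_nonneg_right
      (four_mul_sub_two_le_add (hr_mono i hi1 hin) (hd i hi1 hin.le) (hd (i + 1) (by omega) hin))
      (sub_nonneg.2 (hμ_mono i hi1 hin).le)
  have hlast : (4 * (g : ℚ) - 4) * μ n ≤ (d n + d (n + 1)) * μ n := by
    have hdn := hd n hn le_rfl
    rw [hr_n, Int.cast_natCast] at hdn
    exact mul_le_mul_of_nonneg_right (by linarith) hμ_n
  have htele : ∑ i ∈ Ico 1 n, (μ i - μ (i + 1)) = μ 1 - μ n := by
    rw [← neg_sub, ← sum_Ico_sub μ hn, ← sum_neg_distrib]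
    simp only [neg_sub]
  rw [← Ico_add_one_right_eq_Icc, sum_Ico_succ_top hn, hμ_n1, sub_zero] at hχ ⊢
  rw [hr_n] at hχ
  simp only [sub_mul, mul_assoc, sum_sub_distrib, ← mul_sum, htele] at hbody
  push_cast at hχ
  linarith

/-- Inequality (3.3) in the proof of Xiao's slope inequality in positive characteristic. -/
theorem stmt_1 (g n : ℕ) (hg : 2 ≤ g) (hn : 1 ≤ n)
    (r : ℕ → ℤ) (μ d : ℕ → ℚ) (χ : ℚ)
    (hr_pos : 0 < r 1)
    (hr_mono : ∀ i, 1 ≤ i → i < n → r i < r (i + 1))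
    (hr_n : r n = (g : ℤ))
    (hμ_mono : ∀ i, 1 ≤ i → i < n → μ (i + 1) < μ i)
    (hμ_n : 0 ≤ μ n)
    (hμ_n1 : μ (n + 1) = 0)
    (hd : ∀ i, 1 ≤ i → i ≤ n → 2 * ((r i : ℚ) - 1) ≤ d i)
    (hd_n1 : d (n + 1) = 2 * (g : ℚ) - 2)
    (hχ : χ = ∑ i ∈ Finset.Icc 1 n, (r i : ℚ) * (μ i - μ (i + 1))) :
    4 * χ - 2 * (μ 1 + μ n) ≤ ∑ i ∈ Finset.Icc 1 n, (d i + d (i + 1)) * (μ i - μ (i + 1)) :=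
  stmt_1_general g n hn r μ d χ hr_mono hr_n hμ_mono hμ_n hμ_n1 hd hd_n1 hχ
end

section
/- Let n ≥ 1 be an integer, let 0 < r_1 < r_2 < ⋯ < r_n = 4 be integers (set r_0 = 0), let 0 = v_1 < v_2 < ⋯ < v_n be rational numbers, and let d_1 ≤ d_2 ≤ ⋯ ≤ d_n = 6 be rational numbers with d_i ≥ r_i − 1 for every 1 ≤ i ≤ n. Define Φ = Σ_{i=1}^{n−1}(d_i + d_{i+1})(v_i − v_{i+1}) + 12·v_n and Ψ = Σ_{i=1}^{n}(r_i − r_{i−1})·v_i. Then Φ ≤ 5·Ψ. -/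
/-!
Summation by parts (using `v₁ = 0`, `r_n = 4`) rewrites `5Ψ - Φ` as
`∑_{i<n} (d_i + d_{i+1} + 8 - 5 r_i) (v_{i+1} - v_i)`. The increments of `v` are positive, and every
coefficient is positive: `d_i + d_{i+1} ≥ 2 r_i - 1 ≥ 5 r_i - 8` when `r_i ≤ 2`, while `r_i = 3` forces
`i + 1 = n`, so `d_{i+1} = 6` and `d_i + d_{i+1} ≥ 8`.
-/

open Finset

theorem sum_Icc_one_sub_mul_eq {R : Type*} [CommRing R] (f g : ℕ → R) (m : ℕ) :
    ∑ i ∈ Icc 1 (m + 1), (f i - f (i - 1)) * g i =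
      f (m + 1) * g (m + 1) - f 0 * g 1 - ∑ i ∈ Icc 1 m, f i * (g (i + 1) - g i) := by
  induction m with
  | zero => simp [sub_mul]
  | succ m ih =>
    rw [sum_Icc_succ_top (by omega), ih, sum_Icc_succ_top (by omega), Nat.add_sub_cancel]
    ring

theorem sum_Icc_one_sub_eq {G : Type*} [AddCommGroup G] (g : ℕ → G) (m : ℕ) :
    ∑ i ∈ Icc 1 m, (g (i + 1) - g i) = g (m + 1) - g 1 := by
  rw [← Ico_add_one_right_eq_Icc, sum_Ico_sub _ (by omega)]

theorem five_mul_sum_sub_sum_eq_sum {r v d : ℕ → ℚ} {m : ℕ} (hv1 : v 1 = 0) (hr : r (m + 1) = 4) :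
    5 * ∑ i ∈ Icc 1 (m + 1), (r i - r (i - 1)) * v i -
        (∑ i ∈ Icc 1 m, (d i + d (i + 1)) * (v i - v (i + 1)) + 12 * v (m + 1)) =
      ∑ i ∈ Icc 1 m, (d i + d (i + 1) + 8 - 5 * r i) * (v (i + 1) - v i) := by
  have hv_top := sum_Icc_one_sub_eq v m
  rw [hv1, sub_zero] at hv_top
  have hsplit : ∑ i ∈ Icc 1 m, (d i + d (i + 1) + 8 - 5 * r i) * (v (i + 1) - v i) =
      -∑ i ∈ Icc 1 m, (d i + d (i + 1)) * (v i - v (i + 1)) +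
        8 * ∑ i ∈ Icc 1 m, (v (i + 1) - v i) - 5 * ∑ i ∈ Icc 1 m, r i * (v (i + 1) - v i) := by
    simp only [mul_sum, ← sum_neg_distrib, ← sum_add_distrib, ← sum_sub_distrib]
    exact sum_congr rfl fun i _ => by ring
  rw [sum_Icc_one_sub_mul_eq, hv1, hr, hsplit, hv_top]
  ring

theorem five_mul_le_add_add_eight {a b : ℤ} {x y : ℚ} (hab : a < b) (hb : b ≤ 4)
    (hx : (a : ℚ) - 1 ≤ x) (hy : (b : ℚ) - 1 ≤ y) (hy_top : b = 4 → y = 6) :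
    5 * (a : ℚ) ≤ x + y + 8 := by
  have hab' : (a : ℚ) + 1 ≤ b := by exact_mod_cast hab
  rcases le_or_gt a 2 with ha | ha
  · have : (a : ℚ) ≤ 2 := by exact_mod_cast ha
    linarith
  · obtain ⟨rfl, rfl⟩ : a = 3 ∧ b = 4 := by omega
    have := hy_top rfl
    norm_num at hx ⊢
    linarith

theorem stmt_3_general (n : ℕ) (hn : 1 ≤ n)
    (r : ℕ → ℤ) (v d : ℕ → ℚ) (Φ Ψ : ℚ)
    (hr_mono : ∀ i, 1 ≤ i → i < n → r i < r (i + 1))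
    (hr_n : r n = 4)
    (hv1 : v 1 = 0)
    (hv_mono : ∀ i, 1 ≤ i → i < n → v i < v (i + 1))
    (hd_n : d n = 6)
    (hd : ∀ i, 1 ≤ i → i ≤ n → (r i : ℚ) - 1 ≤ d i)
    (hΦ : Φ = (∑ i ∈ Finset.Icc 1 (n - 1), (d i + d (i + 1)) * (v i - v (i + 1))) + 12 * v n)
    (hΨ : Ψ = ∑ i ∈ Finset.Icc 1 n, ((r i : ℚ) - (r (i - 1) : ℚ)) * v i) :
    Φ ≤ 5 * Ψ := by
  obtain ⟨m, rfl⟩ : ∃ m, n = m + 1 := ⟨n - 1, by omega⟩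
  rw [Nat.add_sub_cancel] at hΦ
  have hr_strict : StrictMonoOn r (Set.Icc 1 (m + 1)) :=
    strictMonoOn_of_lt_add_one Set.ordConnected_Icc fun i _ hi hi' => hr_mono i hi.1 hi'.2
  have hr_top : ∀ i ∈ Icc 1 m, r (i + 1) ≤ 4 ∧ (r (i + 1) = 4 → d (i + 1) = 6) := by
    intro i hi
    rcases (mem_Icc.1 hi).2.lt_or_eq with him | rfl
    · have hlt : r (i + 1) < 4 :=
        hr_n ▸ hr_strict ⟨by omega, by omega⟩ ⟨by omega, le_rfl⟩ (by omega)
      exact ⟨hlt.le, fun h => absurd h hlt.ne⟩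
    · exact ⟨hr_n.le, fun _ => hd_n⟩
  rw [← sub_nonneg, hΦ, hΨ, five_mul_sum_sub_sum_eq_sum hv1 (by exact_mod_cast hr_n)]
  refine sum_nonneg fun i hi => ?_
  obtain ⟨hi1, him⟩ := mem_Icc.1 hi
  have hcoef := five_mul_le_add_add_eight (hr_mono i hi1 (by omega)) (hr_top i hi).1
    (hd i hi1 (by omega)) (hd (i + 1) (by omega) (by omega)) (hr_top i hi).2
  exact mul_nonneg (by linarith) (sub_nonneg.2 (hv_mono i hi1 (by omega)).le)

/-- Combinatorial lemma (case g = 4) for the slope inequality of genus-4 fibrations. -/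
theorem stmt_3 (n : ℕ) (hn : 1 ≤ n)
    (r : ℕ → ℤ) (v d : ℕ → ℚ) (Φ Ψ : ℚ)
    (hr0 : r 0 = 0)
    (hr_pos : 0 < r 1)
    (hr_mono : ∀ i, 1 ≤ i → i < n → r i < r (i + 1))
    (hr_n : r n = 4)
    (hv1 : v 1 = 0)
    (hv_mono : ∀ i, 1 ≤ i → i < n → v i < v (i + 1))
    (hd_mono : ∀ i, 1 ≤ i → i < n → d i ≤ d (i + 1))
    (hd_n : d n = 6)
    (hd : ∀ i, 1 ≤ i → i ≤ n → (r i : ℚ) - 1 ≤ d i)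
    (hΦ : Φ = (∑ i ∈ Finset.Icc 1 (n - 1), (d i + d (i + 1)) * (v i - v (i + 1))) + 12 * v n)
    (hΨ : Ψ = ∑ i ∈ Finset.Icc 1 n, ((r i : ℚ) - (r (i - 1) : ℚ)) * v i) :
    Φ ≤ 5 * Ψ :=
  stmt_3_general n hn r v d Φ Ψ hr_mono hr_n hv1 hv_mono hd_n hd hΦ hΨ
end

section
/- Let g ≥ 5 and n ≥ 1 be integers, let 0 < r_1 < r_2 < ⋯ < r_n = g be integers (set r_0 = 0), let 0 = v_1 < v_2 < ⋯ < v_n be rational numbers, and let d_1 ≤ d_2 ≤ ⋯ ≤ d_n = 2g − 2 be rational numbers with d_i ≥ r_i − 1 for every 1 ≤ i ≤ n. Define Φ = Σ_{i=1}^{n−1}(d_i + d_{i+1})(v_i − v_{i+1}) + 4(g−1)·v_n and Ψ = Σ_{i=1}^{n}(r_i − r_{i−1})·v_i. Then Φ ≤ (2g − 4)·Ψ. -/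
/-!
Summation by parts rewrites `(2g - 4)Ψ - Φ` as `∑ⱼ (v_{j+1} - v_j) c_j` with
`c_j = d_j + d_{j+1} + (2g - 4)(g - r_j) - 4(g - 1)`, so it suffices that every `c_j ≥ 0`.
Since the `r_i` are strictly increasing integers ending at `g`, we have `r_j ≤ g - 2` for
`j < n - 1`, and then `d_j + d_{j+1} ≥ 2r_j - 1` already gives `c_j ≥ 2g - 9`; for the last
index only `r_j ≤ g - 1` is available, and the bound `d_n = 2g - 2` gives `c_j ≥ g - 4`.
-/

open Finset

section

variable {R : Type*} [CommRing R]

theorem Finset.sum_Icc_one_sub (v : ℕ → R) (m : ℕ) :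
    ∑ j ∈ Icc 1 m, (v (j + 1) - v j) = v (m + 1) - v 1 := by
  rw [← Ico_add_one_right_eq_Icc, sum_Ico_sub v (by omega)]

theorem Finset.sum_Icc_one_by_parts (ρ v : ℕ → R) (m : ℕ) :
    ∑ i ∈ Icc 1 (m + 1), (ρ i - ρ (i - 1)) * v i
      = (ρ (m + 1) - ρ 0) * v 1 + ∑ j ∈ Icc 1 m, (v (j + 1) - v j) * (ρ (m + 1) - ρ j) := by
  induction m with
  | zero => simp
  | succ k ih =>
    have split : ∀ j ∈ Icc 1 k, (v (j + 1) - v j) * (ρ (k + 2) - ρ j)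
        = (v (j + 1) - v j) * (ρ (k + 1) - ρ j) + (ρ (k + 2) - ρ (k + 1)) * (v (j + 1) - v j) :=
      fun j _ => by ring
    rw [sum_Icc_succ_top (by omega), ih, sum_Icc_succ_top (by omega), sum_congr rfl split,
      sum_add_distrib, ← mul_sum, sum_Icc_one_sub]
    simp only [Nat.add_sub_cancel]
    ring

/-- In the paper's notation `top = r_n`, `ρ = r_j`, `x = d_j` and `y = d_{j+1}`. -/
def slopeGapCoeff (g top ρ x y : R) : R :=
  x + y + (2 * g - 4) * (top - ρ) - (4 * g - 4)

theorem sub_eq_sum_slopeGapCoeff (g : R) (ρ v d : ℕ → R) (m : ℕ) (hv : v 1 = 0) :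
    (2 * g - 4) * ∑ i ∈ Icc 1 (m + 1), (ρ i - ρ (i - 1)) * v i
        - ((∑ i ∈ Icc 1 m, (d i + d (i + 1)) * (v i - v (i + 1))) + 4 * (g - 1) * v (m + 1))
      = ∑ j ∈ Icc 1 m, (v (j + 1) - v j) * slopeGapCoeff g (ρ (m + 1)) (ρ j) (d j) (d (j + 1)) := by
  have expand : ∀ j ∈ Icc 1 m,
      (v (j + 1) - v j) * slopeGapCoeff g (ρ (m + 1)) (ρ j) (d j) (d (j + 1))
        = -((d j + d (j + 1)) * (v j - v (j + 1)))
          + (2 * g - 4) * ((v (j + 1) - v j) * (ρ (m + 1) - ρ j))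
          - (4 * g - 4) * (v (j + 1) - v j) := fun j _ => by unfold slopeGapCoeff; ring
  rw [sum_congr rfl expand, sum_sub_distrib, sum_add_distrib, sum_neg_distrib, ← mul_sum,
    ← mul_sum, sum_Icc_one_sub, sum_Icc_one_by_parts, hv]
  ring

end

section

variable {K : Type*} [Field K] [LinearOrder K] [IsStrictOrderedRing K] {g a b x y : K}

theorem slopeGapCoeff_nonneg (hg : 9 ≤ 2 * g) (hab : a + 1 ≤ b) (hb : b ≤ g - 1)
    (hx : a - 1 ≤ x) (hy : b - 1 ≤ y) : 0 ≤ slopeGapCoeff g g a x y := by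
  unfold slopeGapCoeff
  nlinarith [mul_nonneg (by linarith : (0 : K) ≤ 2 * g - 6) (by linarith : (0 : K) ≤ g - a - 2)]

theorem slopeGapCoeff_nonneg_last (hg : 4 ≤ g) (ha : a ≤ g - 1) (hx : a - 1 ≤ x) :
    0 ≤ slopeGapCoeff g g a x (2 * g - 2) := by
  unfold slopeGapCoeff
  nlinarith [mul_nonneg (by linarith : (0 : K) ≤ 2 * g - 5) (by linarith : (0 : K) ≤ g - a - 1)]

end

theorem stmt_4_general (g n : ℕ) (hg : 5 ≤ g) (hn : 1 ≤ n)
    (r : ℕ → ℤ) (v d : ℕ → ℚ) (Φ Ψ : ℚ)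
    (hr_mono : ∀ i, 1 ≤ i → i < n → r i < r (i + 1))
    (hr_n : r n = (g : ℤ))
    (hv1 : v 1 = 0)
    (hv_mono : ∀ i, 1 ≤ i → i < n → v i < v (i + 1))
    (hd_n : d n = 2 * (g : ℚ) - 2)
    (hd : ∀ i, 1 ≤ i → i ≤ n → (r i : ℚ) - 1 ≤ d i)
    (hΦ : Φ = (∑ i ∈ Finset.Icc 1 (n - 1), (d i + d (i + 1)) * (v i - v (i + 1)))
        + 4 * ((g : ℚ) - 1) * v n)
    (hΨ : Ψ = ∑ i ∈ Finset.Icc 1 n, ((r i : ℚ) - (r (i - 1) : ℚ)) * v i) :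
    Φ ≤ (2 * (g : ℚ) - 4) * Ψ := by
  obtain ⟨m, rfl⟩ : ∃ m, n = m + 1 := ⟨n - 1, by omega⟩
  have hr : StrictMonoOn r (Set.Icc 1 (m + 1)) :=
    strictMonoOn_of_lt_add_one Set.ordConnected_Icc fun i _ hi hi' =>
      hr_mono i hi.1 (Nat.add_one_le_iff.1 hi'.2)
  have hg' : (5 : ℚ) ≤ g := by exact_mod_cast hg
  have gap := sub_eq_sum_slopeGapCoeff (g : ℚ) (fun i => (r i : ℚ)) v d m hv1
  simp only [hr_n, Int.cast_natCast, Nat.add_sub_cancel] at gap hΦ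
  rw [hΦ, hΨ, ← sub_nonneg, gap]
  refine sum_nonneg fun j hj => ?_
  obtain ⟨hj1, hjm⟩ := mem_Icc.1 hj
  refine mul_nonneg (sub_nonneg.2 (hv_mono j hj1 (by omega)).le) ?_
  have hstep : r j + 1 ≤ r (j + 1) := hr_mono j hj1 (by omega)
  rcases hjm.lt_or_eq with hjlt | rfl
  · have hnext : r (j + 1) ≤ g - 1 := by
      have := hr.monotoneOn (a := j + 1) (b := m) ⟨by omega, by omega⟩ ⟨by omega, by omega⟩
        (by omega)
      have := hr_mono m (by omega) (by omega)
      omega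
    exact slopeGapCoeff_nonneg (by linarith) (by exact_mod_cast hstep)
      (by exact_mod_cast hnext) (hd j hj1 (by omega)) (hd (j + 1) (by omega) (by omega))
  · rw [hd_n]
    exact slopeGapCoeff_nonneg_last (by linarith) (by exact_mod_cast (by omega : r j ≤ g - 1))
      (hd j hj1 (by omega))

/-- Combinatorial lemma (case g ≥ 5) for the slope inequality of fibrations of genus g ≥ 5. -/
theorem stmt_4 (g n : ℕ) (hg : 5 ≤ g) (hn : 1 ≤ n)
    (r : ℕ → ℤ) (v d : ℕ → ℚ) (Φ Ψ : ℚ)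
    (hr0 : r 0 = 0)
    (hr_pos : 0 < r 1)
    (hr_mono : ∀ i, 1 ≤ i → i < n → r i < r (i + 1))
    (hr_n : r n = (g : ℤ))
    (hv1 : v 1 = 0)
    (hv_mono : ∀ i, 1 ≤ i → i < n → v i < v (i + 1))
    (hd_mono : ∀ i, 1 ≤ i → i < n → d i ≤ d (i + 1))
    (hd_n : d n = 2 * (g : ℚ) - 2)
    (hd : ∀ i, 1 ≤ i → i ≤ n → (r i : ℚ) - 1 ≤ d i)
    (hΦ : Φ = (∑ i ∈ Finset.Icc 1 (n - 1), (d i + d (i + 1)) * (v i - v (i + 1)))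
        + 4 * ((g : ℚ) - 1) * v n)
    (hΨ : Ψ = ∑ i ∈ Finset.Icc 1 n, ((r i : ℚ) - (r (i - 1) : ℚ)) * v i) :
    Φ ≤ (2 * (g : ℚ) - 4) * Ψ :=
  stmt_4_general g n hg hn r v d Φ Ψ hr_mono hr_n hv1 hv_mono hd_n hd hΦ hΨ
end

section
/- Let g ≥ 2 and b ≥ 2 be integers and let φ, ψ be real numbers with 0 ≤ φ < 12, ψ ≥ 0, and D := 12(8 − φ)(g − 1) − 4φ − 12ψ > 0. Let K, c, χ, χf, l be real numbers with K > 0, l ≥ 0, 12χ = K + c, c ≥ −4(b − 1), χf = χ − (g − 1)(b − 1) + l, and K − 8(g − 1)(b − 1) ≥ φ·χf − ψ·(b − 1). Then 12χ ≥ (1 − 4(12 − φ)/D)·K. -/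
/-!
Noether's formula together with `c₂ ≥ -4(b - 1)` bounds `φ χ` from below by `φ (K - 4(b - 1)) / 12`;
feeding this into the slope inequality (after dropping `φ l ≥ 0`) eliminates `χ` and gives
`(b - 1) D ≤ (12 - φ) K`. Hence `4(b - 1) ≤ 4(12 - φ) K / D`, and `12 χ = K + c ≥ K - 4(b - 1)`
yields the claim.
-/

theorem mul_le_twelve_sub_mul_of_slope {φ ψ K c χ χf l G β : ℝ}
    (hφ0 : 0 ≤ φ) (hl : 0 ≤ l) (hNoether : 12 * χ = K + c) (hc : c ≥ -4 * β)
    (hχf : χf = χ - G * β + l) (hslope : K - 8 * G * β ≥ φ * χf - ψ * β) :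
    β * (12 * (8 - φ) * G - 4 * φ - 12 * ψ) ≤ (12 - φ) * K := by
  have hslope' : K - 8 * G * β ≥ φ * (χ - G * β) - ψ * β := by
    nlinarith [mul_nonneg hφ0 hl]
  have hφχ : 12 * (φ * χ) ≥ φ * (K - 4 * β) := by
    nlinarith [mul_le_mul_of_nonneg_left hc hφ0]
  linarith

theorem stmt_5_general (g b : ℕ)
    (φ ψ K c χ χf l : ℝ)
    (hφ0 : 0 ≤ φ)
    (hD : 0 < 12 * (8 - φ) * ((g : ℝ) - 1) - 4 * φ - 12 * ψ)
    (hl : 0 ≤ l)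
    (hNoether : 12 * χ = K + c)
    (hc : c ≥ -4 * ((b : ℝ) - 1))
    (hχf : χf = χ - ((g : ℝ) - 1) * ((b : ℝ) - 1) + l)
    (hslope : K - 8 * ((g : ℝ) - 1) * ((b : ℝ) - 1) ≥ φ * χf - ψ * ((b : ℝ) - 1)) :
    12 * χ ≥ (1 - 4 * (12 - φ) / (12 * (8 - φ) * ((g : ℝ) - 1) - 4 * φ - 12 * ψ)) * K := by
  set D := 12 * (8 - φ) * ((g : ℝ) - 1) - 4 * φ - 12 * ψ
  have hβ : (b : ℝ) - 1 ≤ (12 - φ) * K / D :=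
    (le_div_iff₀ hD).2 (mul_le_twelve_sub_mul_of_slope hφ0 hl hNoether hc hχf hslope)
  calc 12 * χ = K + c := hNoether
    _ ≥ K - 4 * ((12 - φ) * K / D) := by linarith
    _ = (1 - 4 * (12 - φ) / D) * K := by ring

/-- General arithmetic elimination in the proof of the Miyaoka–Yau type inequalities. -/
theorem stmt_5 (g b : ℕ) (hg : 2 ≤ g) (hb : 2 ≤ b)
    (φ ψ K c χ χf l : ℝ)
    (hφ0 : 0 ≤ φ) (hφ12 : φ < 12) (hψ : 0 ≤ ψ)
    (hD : 0 < 12 * (8 - φ) * ((g : ℝ) - 1) - 4 * φ - 12 * ψ)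
    (hK : 0 < K) (hl : 0 ≤ l)
    (hNoether : 12 * χ = K + c)
    (hc : c ≥ -4 * ((b : ℝ) - 1))
    (hχf : χf = χ - ((g : ℝ) - 1) * ((b : ℝ) - 1) + l)
    (hslope : K - 8 * ((g : ℝ) - 1) * ((b : ℝ) - 1) ≥ φ * χf - ψ * ((b : ℝ) - 1)) :
    12 * χ ≥ (1 - 4 * (12 - φ) / (12 * (8 - φ) * ((g : ℝ) - 1) - 4 * φ - 12 * ψ)) * K :=
  stmt_5_general g b φ ψ K c χ χf l hφ0 hD hl hNoether hc hχf hslope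
end

section
/- Let g ≥ 2 and b ≥ 2 be integers and let K, c, χ, χf, l be real numbers with K > 0, l ≥ 0, 12χ = K + c, c ≥ −4(b − 1), and χf = χ − (g − 1)(b − 1) + l. If g·(K − 8(g − 1)(b − 1)) ≥ (4g − 4)·χf, then (g² − g − 1)·K ≤ (12g + 8)(g − 1)·χ. -/
/-!
Eliminating `χf`, the slope inequality reads `g K ≥ 4(g-1)χ + 4(g²-1)(b-1) + 4(g-1)l`, while
Noether's formula and `c ≥ -4(b-1)` give `4(b-1) ≥ K - 12χ`. Since `g² - 1 ≥ 0` and `l ≥ 0`,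
substituting the second bound into the first leaves `g K ≥ 4(g-1)χ + (g²-1)(K - 12χ)`,
which rearranges to the claim.
-/

section

variable {R : Type*} [CommRing R] [LinearOrder R] [IsStrictOrderedRing R]

lemma slope_ineq_eliminate_chi_f {g B K χ χf l : R} (hg : 1 ≤ g) (hl : 0 ≤ l)
    (hχf : χf = χ - (g - 1) * B + l) (hslope : (4 * g - 4) * χf ≤ g * (K - 8 * (g - 1) * B)) :
    4 * (g - 1) * χ + 4 * (g ^ 2 - 1) * B ≤ g * K := by
  subst hχf
  nlinarith [mul_nonneg (sub_nonneg.mpr hg) hl]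

lemma sub_twelve_mul_le_of_noether {B K c χ : R} (hNoether : 12 * χ = K + c)
    (hc : -4 * B ≤ c) : K - 12 * χ ≤ 4 * B := by
  linarith

lemma slope_noether_bound {g B K c χ χf l : R} (hg : 1 ≤ g) (hl : 0 ≤ l)
    (hNoether : 12 * χ = K + c) (hc : -4 * B ≤ c) (hχf : χf = χ - (g - 1) * B + l)
    (hslope : (4 * g - 4) * χf ≤ g * (K - 8 * (g - 1) * B)) :
    (g ^ 2 - g - 1) * K ≤ (12 * g + 8) * (g - 1) * χ := by
  have hslope' := slope_ineq_eliminate_chi_f hg hl hχf hslope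
  have hB := sub_twelve_mul_le_of_noether hNoether hc
  have hg2 : 0 ≤ g ^ 2 - 1 := by nlinarith
  linarith [mul_le_mul_of_nonneg_left hB hg2]

end

theorem stmt_6_general (g b : ℕ) (hg : 2 ≤ g)
    (K c χ χf l : ℝ)
    (hl : 0 ≤ l)
    (hNoether : 12 * χ = K + c)
    (hc : c ≥ -4 * ((b : ℝ) - 1))
    (hχf : χf = χ - ((g : ℝ) - 1) * ((b : ℝ) - 1) + l)
    (hslope : (g : ℝ) * (K - 8 * ((g : ℝ) - 1) * ((b : ℝ) - 1)) ≥ (4 * (g : ℝ) - 4) * χf) :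
    ((g : ℝ) ^ 2 - (g : ℝ) - 1) * K ≤ (12 * (g : ℝ) + 8) * ((g : ℝ) - 1) * χ :=
  slope_noether_bound (by exact_mod_cast hg.trans' one_le_two) hl hNoether hc hχf hslope

/-- Arithmetic content of the hyperelliptic case of the Miyaoka–Yau type inequality. -/
theorem stmt_6 (g b : ℕ) (hg : 2 ≤ g) (hb : 2 ≤ b)
    (K c χ χf l : ℝ)
    (hK : 0 < K) (hl : 0 ≤ l)
    (hNoether : 12 * χ = K + c)
    (hc : c ≥ -4 * ((b : ℝ) - 1))
    (hχf : χf = χ - ((g : ℝ) - 1) * ((b : ℝ) - 1) + l)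
    (hslope : (g : ℝ) * (K - 8 * ((g : ℝ) - 1) * ((b : ℝ) - 1)) ≥ (4 * (g : ℝ) - 4) * χf) :
    ((g : ℝ) ^ 2 - (g : ℝ) - 1) * K ≤ (12 * (g : ℝ) + 8) * ((g : ℝ) - 1) * χ :=
  stmt_6_general g b hg K c χ χf l hl hNoether hc hχf hslope
end

section
/- Let g ≥ 5 and b ≥ 2 be integers and let K, c, χ, χf, l be real numbers with K > 0, l ≥ 0, 12χ = K + c, c ≥ −4(b − 1), and χf = χ − (g − 1)(b − 1) + l. If (g² − 3g + 1)·(K − 8(g − 1)(b − 1)) ≥ 2(g − 1)(g − 2)·χf − 4(g − 1)(g² − 4g + 2)·(b − 1), then g·(3g² − 12g + 15)·K ≤ 12(g − 1)(3g² − 4g − 4)·χ. -/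
/-!
Substituting `χ_f` into the slope inequality collapses its `b - 1` terms into
`(g² - 3g + 1) K ≥ 2 (g - 1)(g - 2) (χ + l + (g + 1)(b - 1))`.
Dropping `l ≥ 0` and bounding `4 (b - 1) ≥ K - 12 χ` (Noether together with `c₂ ≥ -4 (b - 1)`),
all coefficients being nonnegative for `g ≥ 2`, leaves an inequality linear in `K` and `χ`,
which is the claim divided by `3`, since `(g - 2)(3g + 2) = 3g² - 4g - 4`.
-/

theorem slope_inequality_iff (g K χ l B : ℝ) :
    (g ^ 2 - 3 * g + 1) * (K - 8 * (g - 1) * B)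
        ≥ 2 * (g - 1) * (g - 2) * (χ - (g - 1) * B + l) - 4 * (g - 1) * (g ^ 2 - 4 * g + 2) * B ↔
      2 * (g - 1) * (g - 2) * (χ + l + (g + 1) * B) ≤ (g ^ 2 - 3 * g + 1) * K := by
  constructor <;> intro h <;> linarith

theorem mul_le_of_slope_of_chern_bound {g K χ l B : ℝ} (hg : 2 ≤ g) (hl : 0 ≤ l)
    (hchern : K - 12 * χ ≤ 4 * B)
    (hslope : 2 * (g - 1) * (g - 2) * (χ + l + (g + 1) * B) ≤ (g ^ 2 - 3 * g + 1) * K) :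
    g * (g ^ 2 - 4 * g + 5) * K ≤ 4 * (g - 1) * (g - 2) * (3 * g + 2) * χ := by
  have hcoeff : 0 ≤ (g - 1) * (g - 2) := mul_nonneg (by linarith) (by linarith)
  have hl' : 0 ≤ (g - 1) * (g - 2) * l := mul_nonneg hcoeff hl
  have hB : (g - 1) * (g - 2) * (g + 1) * (K - 12 * χ) ≤ (g - 1) * (g - 2) * (g + 1) * (4 * B) :=
    mul_le_mul_of_nonneg_left hchern (mul_nonneg hcoeff (by linarith))
  linarith

theorem stmt_9_general (g b : ℕ) (hg : 5 ≤ g)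
    (K c χ χf l : ℝ)
    (hl : 0 ≤ l)
    (hNoether : 12 * χ = K + c)
    (hc : c ≥ -4 * ((b : ℝ) - 1))
    (hχf : χf = χ - ((g : ℝ) - 1) * ((b : ℝ) - 1) + l)
    (hslope : ((g : ℝ) ^ 2 - 3 * (g : ℝ) + 1) * (K - 8 * ((g : ℝ) - 1) * ((b : ℝ) - 1))
        ≥ 2 * ((g : ℝ) - 1) * ((g : ℝ) - 2) * χf
          - 4 * ((g : ℝ) - 1) * ((g : ℝ) ^ 2 - 4 * (g : ℝ) + 2) * ((b : ℝ) - 1)) :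
    (g : ℝ) * (3 * (g : ℝ) ^ 2 - 12 * (g : ℝ) + 15) * K
      ≤ 12 * ((g : ℝ) - 1) * (3 * (g : ℝ) ^ 2 - 4 * (g : ℝ) - 4) * χ := by
  subst hχf
  have hg2 : (2 : ℝ) ≤ g := by exact_mod_cast hg.trans' (by norm_num)
  have key := mul_le_of_slope_of_chern_bound hg2 hl (by linarith)
    ((slope_inequality_iff _ _ _ _ _).mp hslope)
  linear_combination 3 * key

/-- Arithmetic content of the g ≥ 5 case of the Miyaoka–Yau type inequality. -/
theorem stmt_9 (g b : ℕ) (hg : 5 ≤ g) (hb : 2 ≤ b)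
    (K c χ χf l : ℝ)
    (hK : 0 < K) (hl : 0 ≤ l)
    (hNoether : 12 * χ = K + c)
    (hc : c ≥ -4 * ((b : ℝ) - 1))
    (hχf : χf = χ - ((g : ℝ) - 1) * ((b : ℝ) - 1) + l)
    (hslope : ((g : ℝ) ^ 2 - 3 * (g : ℝ) + 1) * (K - 8 * ((g : ℝ) - 1) * ((b : ℝ) - 1))
        ≥ 2 * ((g : ℝ) - 1) * ((g : ℝ) - 2) * χf
          - 4 * ((g : ℝ) - 1) * ((g : ℝ) ^ 2 - 4 * (g : ℝ) + 2) * ((b : ℝ) - 1)) :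
    (g : ℝ) * (3 * (g : ℝ) ^ 2 - 12 * (g : ℝ) + 15) * K
      ≤ 12 * ((g : ℝ) - 1) * (3 * (g : ℝ) ^ 2 - 4 * (g : ℝ) - 4) * χ :=
  stmt_9_general g b hg K c χ χf l hl hNoether hc hχf hslope
end
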